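/- Let M ∈ ℚ⟦X⟧ be the Motzkin generating function, the unique power series with M = 1 + X·M + X²·M², and let c ∈ ℚ⟦X⟧ be the Catalan generating function, the unique power series with c = 1 + X·c². Set u = X·(c ∘ (-X))·(1 + X)⁻¹, a power series with zero constant term. Then M ∘ u = 1 + X; equivalently, (M - 1) ∘ u = X, so that u = x·c(-x)/(1+x) is the compositional inverse of M(x) - 1, and the Riordan array inverse (M, M-1)⁻¹ equals (1/(1+x), x·c(-x)/(1+x)). -/

import Mathlib

/-- Composition `u ∘ f` of formal power series (substitution of `f` into `u`), valid
when `f` has zero constant term: the coefficient of `X^n` is `∑_{k ≤ n} u_k [X^n] f^k`. -/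
noncomputable def composePS (u f : PowerSeries ℚ) : PowerSeries ℚ :=
  PowerSeries.mk fun n =>
    ∑ k ∈ Finset.range (n + 1), PowerSeries.coeff k u * PowerSeries.coeff n (f ^ k)

/-!
Substituting a series `u` with zero constant term is a ring homomorphism, so `M ∘ u` solves
`y = 1 + u y + u² y²`. This equation has at most one solution, because for two solutions
`(y - z)(1 - u - u²(y + z)) = 0` and the second factor has constant term `1`. With
`D = c ∘ (-X)` one has `D = 1 - X D²`, and since `X D = u (1 + X)` this says exactly that
`1 + X` solves the same equation.
-/

namespace PowerSeries

theorem coeff_pow_eq_zero_of_lt {R : Type*} [CommSemiring R] {f : R⟦X⟧}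
    (hf : constantCoeff f = 0) {n k : ℕ} (h : n < k) : coeff n (f ^ k) = 0 :=
  X_pow_dvd_iff.mp (pow_dvd_pow_of_dvd (X_dvd_iff.mpr hf) k) n h

theorem composePS_eq_subst {f : ℚ⟦X⟧} (hf : constantCoeff f = 0) (u : ℚ⟦X⟧) :
    composePS u f = u.subst f := by
  ext n
  rw [coeff_subst' (HasSubst.of_constantCoeff_zero' hf), composePS, coeff_mk,
    finsum_eq_sum_of_support_subset (s := Finset.range (n + 1))]
  · simp only [smul_eq_mul]
  · intro k hk
    contrapose! hk
    simp [coeff_pow_eq_zero_of_lt hf (by simpa using hk)]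

variable {R : Type*} [CommRing R]

theorem subst_neg_X_of_catalan_equation {c : R⟦X⟧} (hc : c = 1 + X * c ^ 2) :
    (c.subst (-X : R⟦X⟧) : R⟦X⟧) = 1 - X * (c.subst (-X : R⟦X⟧) : R⟦X⟧) ^ 2 := by
  have hnegX : HasSubst (-X : R⟦X⟧) := HasSubst.of_constantCoeff_zero' (by simp)
  have key := congrArg (substAlgHom hnegX) hc
  rw [map_add, map_one, map_mul, map_pow, substAlgHom_X, coe_substAlgHom] at key
  linear_combination key

theorem subst_of_motzkin_equation {M u : R⟦X⟧} (hM : M = 1 + X * M + X ^ 2 * M ^ 2)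
    (hu : constantCoeff u = 0) :
    (M.subst u : R⟦X⟧) = 1 + u * M.subst u + u ^ 2 * (M.subst u : R⟦X⟧) ^ 2 := by
  have key := congrArg (substAlgHom (HasSubst.of_constantCoeff_zero' hu)) hM
  rwa [map_add, map_add, map_one, map_mul, map_mul, map_pow, map_pow, substAlgHom_X,
    coe_substAlgHom] at key

theorem eq_of_motzkin_equation {u y z : R⟦X⟧} (hu : constantCoeff u = 0)
    (hy : y = 1 + u * y + u ^ 2 * y ^ 2) (hz : z = 1 + u * z + u ^ 2 * z ^ 2) : y = z := by
  have hunit : IsUnit (1 - u - u ^ 2 * (y + z)) := by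
    simp [isUnit_iff_constantCoeff, hu]
  rw [← sub_eq_zero, ← hunit.mul_left_eq_zero]
  linear_combination hy - hz

end PowerSeries

open PowerSeries in
/-- Let `M` be the Motzkin series (`M = 1 + XM + X²M²`) and `c` the Catalan
series (`c = 1 + Xc²`). With `u = X·(c∘(-X))·(1+X)⁻¹`, one has `M ∘ u = 1 + X`, equivalently
`(M-1) ∘ u = X`: `u = x·c(-x)/(1+x)` is the compositional inverse of `M(x) - 1`, so that
`(M, M-1)⁻¹ = (1/(1+x), x·c(-x)/(1+x))`. -/
theorem stmt_16 (M c : PowerSeries ℚ)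
    (hM : M = 1 + PowerSeries.X * M + PowerSeries.X ^ 2 * M ^ 2)
    (hc : c = 1 + PowerSeries.X * c ^ 2) :
    composePS M (PowerSeries.X * composePS c (-PowerSeries.X) * (1 + PowerSeries.X)⁻¹)
        = 1 + PowerSeries.X ∧
    composePS (M - 1) (PowerSeries.X * composePS c (-PowerSeries.X) * (1 + PowerSeries.X)⁻¹)
        = PowerSeries.X := by
  rw [composePS_eq_subst (f := -X) (by simp)]
  obtain ⟨D, hD_def⟩ : ∃ D : ℚ⟦X⟧, c.subst (-X : ℚ⟦X⟧) = D := ⟨_, rfl⟩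
  have hD : D = 1 - X * D ^ 2 := hD_def ▸ subst_neg_X_of_catalan_equation hc
  obtain ⟨u, hu_def⟩ : ∃ u : ℚ⟦X⟧, X * D * (1 + X)⁻¹ = u := ⟨_, rfl⟩
  have hu : constantCoeff u = 0 := by simp [← hu_def]
  have hDu : X * D = u * (1 + X) := by
    rw [← hu_def, mul_assoc, PowerSeries.inv_mul_cancel _ (by simp), mul_one]
  have hMu : M.subst u = 1 + X := by
    refine eq_of_motzkin_equation hu (subst_of_motzkin_equation hM hu) ?_
    linear_combination (-X) * hD + (1 + X * D + u * (1 + X)) * hDu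
  rw [hD_def, hu_def, composePS_eq_subst hu, composePS_eq_subst hu,
    subst_sub (HasSubst.of_constantCoeff_zero' hu), hMu, ← coe_substAlgHom (R := ℚ)
    (HasSubst.of_constantCoeff_zero' hu), map_one]
  exact ⟨rfl, by ring⟩
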